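/- For the two-letter Brzozowski pair A_1, A_2, one has sc(L(A_1)) = m, sc(L(A_2)) = n, and the state complexity of the concatenation satisfies sc(L(A_1)·L(A_2)) = m·2^n − 2^{n−1}. (Hence (L(A_1), L(A_2)) is a two-letter witness for the catenation of two languages.) -/

import Mathlib

/-- The first DFA of the two-letter Brzozowski pair: states `p_0,…,p_{m−1}`, initial
state `p_0`, unique final state `p_{m−1}`; the letter `a` (encoded `0 : Fin 2`) acts as
the cyclic permutation `p_i ↦ p_{(i+1) mod m}` and `b` (encoded `1`) acts as the
transposition exchanging `p_0` and `p_1`. -/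
def dfaW1 (m : ℕ) (h : 0 < m) : DFA (Fin 2) (Fin m) where
  step i x :=
    if x = 0 then ⟨(i.val + 1) % m, Nat.mod_lt _ h⟩
    else ⟨(if i.val = 0 then 1 else if i.val = 1 then 0 else i.val) % m, Nat.mod_lt _ h⟩
  start := ⟨0, h⟩
  accept := {⟨m - 1, by omega⟩}

/-- The second DFA of the two-letter Brzozowski pair: states `q_0,…,q_{n−1}`, initial
state `q_0`, unique final state `q_{n−1}`; the letter `a` acts as the cyclic permutation
`q_j ↦ q_{(j+1) mod n}` and `b` acts as the contraction sending `q_1` to `q_0` and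
fixing all other states. -/
def dfaW2 (n : ℕ) (h : 0 < n) : DFA (Fin 2) (Fin n) where
  step j x :=
    if x = 0 then ⟨(j.val + 1) % n, Nat.mod_lt _ h⟩
    else ⟨(if j.val = 1 then 0 else j.val) % n, Nat.mod_lt _ h⟩
  start := ⟨0, h⟩
  accept := {⟨n - 1, by omega⟩}


/-- The state complexity of a language: the least number of states of a complete DFA
recognizing it. -/
noncomputable def sc {Sig : Type} (L : Language Sig) : ℕ :=
  sInf {c | ∃ (Q : Type) (_ : Fintype Q) (D : DFA Sig Q), D.accepts = L ∧ Fintype.card Q = c}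

set_option maxHeartbeats 1000000

open Fin.CommRing

namespace BrzWit

variable {m n : ℕ}

lemma npos (m : ℕ) [NeZero m] : 0 < m := Nat.pos_of_ne_zero (NeZero.ne m)

section defs
variable (m n : ℕ) [NeZero m] [NeZero n]

def A1 : DFA (Fin 2) (Fin m) := dfaW1 m (npos m)
def A2 : DFA (Fin 2) (Fin n) := dfaW2 n (npos n)

def lst : Fin m := ⟨m - 1, by have := npos m; omega⟩

end defs

def wa (L : ℕ) : List (Fin 2) := List.replicate L 0

@[simp] lemma wa_zero : wa 0 = [] := rfl
@[simp] lemma wa_succ (L : ℕ) : wa (L + 1) = (0 : Fin 2) :: wa L := rfl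
lemma wa_succ' (L : ℕ) : wa (L + 1) = wa L ++ [(0 : Fin 2)] := by
  simp [wa, List.replicate_succ']
lemma wa_append (K L : ℕ) : wa (K + L) = wa K ++ wa L :=
  List.replicate_add K L 0

section steps
variable [NeZero m] [NeZero n]

lemma val_natCast' (k : ℕ) : ((k : Fin m)).val = k % m := Fin.val_natCast k m

lemma val_one_of (hm : 3 ≤ m) : (1 : Fin m).val = 1 := by
  rw [← Nat.cast_one (R := Fin m), val_natCast']
  exact Nat.mod_eq_of_lt (by omega)

lemma A1_step_a (p : Fin m) (hm : 3 ≤ m) : (A1 m).step p 0 = p + 1 := by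
  apply Fin.ext
  rw [Fin.add_def, val_one_of hm]
  simp [A1, dfaW1]

lemma A1_step_b_val (p : Fin m) :
    ((A1 m).step p 1).val = (if p.val = 0 then 1 else if p.val = 1 then 0 else p.val) % m := by
  simp only [A1, dfaW1]
  rw [if_neg (by decide : ¬(1 : Fin 2) = 0)]

lemma A1_step_b (p : Fin m) (hm : 3 ≤ m) :
    (A1 m).step p 1 = if p.val = 0 then ⟨1, by omega⟩ else if p.val = 1 then ⟨0, by omega⟩ else p := by
  apply Fin.ext
  have hp := p.isLt
  rw [A1_step_b_val]
  by_cases h0 : p.val = 0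
  · simp [h0, Nat.mod_eq_of_lt (show 1 < m by omega)]
  · by_cases h1 : p.val = 1
    · simp [h0, h1, Nat.mod_eq_of_lt (show 0 < m by omega)]
    · simp [h0, h1, Nat.mod_eq_of_lt hp]

lemma A2_step_a (q : Fin n) (hn : 3 ≤ n) : (A2 n).step q 0 = q + 1 := by
  apply Fin.ext
  rw [Fin.add_def, val_one_of hn]
  simp [A2, dfaW2]

lemma A2_step_b_val (q : Fin n) :
    ((A2 n).step q 1).val = (if q.val = 1 then 0 else q.val) % n := by
  simp only [A2, dfaW2]
  rw [if_neg (by decide : ¬(1 : Fin 2) = 0)]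

lemma A2_step_b (q : Fin n) (hn : 3 ≤ n) :
    (A2 n).step q 1 = if q.val = 1 then ⟨0, by omega⟩ else q := by
  apply Fin.ext
  have hq := q.isLt
  rw [A2_step_b_val]
  by_cases h1 : q.val = 1
  · simp [h1, Nat.mod_eq_of_lt (show 0 < n by omega)]
  · simp [h1, Nat.mod_eq_of_lt hq]

lemma A2_step_b_ne_one (q : Fin n) (hn : 3 ≤ n) : ((A2 n).step q 1).val ≠ 1 := by
  rw [A2_step_b q hn]
  split
  · simp
  · assumption

lemma A1_evalFrom_cons (p : Fin m) (x : Fin 2) (w : List (Fin 2)) :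
    (A1 m).evalFrom p (x :: w) = (A1 m).evalFrom ((A1 m).step p x) w := rfl

lemma A2_evalFrom_cons (q : Fin n) (x : Fin 2) (w : List (Fin 2)) :
    (A2 n).evalFrom q (x :: w) = (A2 n).evalFrom ((A2 n).step q x) w := rfl

lemma A1_evalFrom_wa (p : Fin m) (L : ℕ) (hm : 3 ≤ m) :
    (A1 m).evalFrom p (wa L) = p + (L : Fin m) := by
  induction L generalizing p with
  | zero => simp [DFA.evalFrom]
  | succ L ih =>
    rw [wa_succ, A1_evalFrom_cons, A1_step_a p hm, ih]
    push_cast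
    ring

lemma A2_evalFrom_wa (q : Fin n) (L : ℕ) (hn : 3 ≤ n) :
    (A2 n).evalFrom q (wa L) = q + (L : Fin n) := by
  induction L generalizing q with
  | zero => simp [DFA.evalFrom]
  | succ L ih =>
    rw [wa_succ, A2_evalFrom_cons, A2_step_a q hn, ih]
    push_cast
    ring

end steps
end BrzWit

namespace BrzWit
section pa
variable {m n : ℕ} [NeZero m] [NeZero n]

/-- the product (subset) automaton for the concatenation -/
def pa (m n : ℕ) [NeZero m] [NeZero n] : DFA (Fin 2) (Fin m × Finset (Fin n)) where
  step := fun ps x =>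
    ((A1 m).step ps.1 x,
      (ps.2.image ((A2 n).step · x)) ∪
        (if (A1 m).step ps.1 x = lst m then {(A2 n).start} else ∅))
  start := ((A1 m).start, ∅)
  accept := {ps | lst n ∈ ps.2}

lemma pa_step_fst (s : Fin m × Finset (Fin n)) (x : Fin 2) :
    ((pa m n).step s x).1 = (A1 m).step s.1 x := rfl

lemma pa_evalFrom_cons (s : Fin m × Finset (Fin n)) (x : Fin 2) (w : List (Fin 2)) :
    (pa m n).evalFrom s (x :: w) = (pa m n).evalFrom ((pa m n).step s x) w := rfl

lemma pa_evalFrom_fst (s : Fin m × Finset (Fin n)) (w : List (Fin 2)) :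
    ((pa m n).evalFrom s w).1 = (A1 m).evalFrom s.1 w := by
  induction w generalizing s with
  | nil => rfl
  | cons x w ih => rw [pa_evalFrom_cons, ih, pa_step_fst, A1_evalFrom_cons]

lemma pa_step_snd_mem (s : Fin m × Finset (Fin n)) (x : Fin 2) (q : Fin n) :
    q ∈ ((pa m n).step s x).2 ↔
      (∃ q0 ∈ s.2, (A2 n).step q0 x = q) ∨ ((A1 m).step s.1 x = lst m ∧ q = (A2 n).start) := by
  simp only [pa, Finset.mem_union, Finset.mem_image]
  constructor
  · rintro (h | h)
    · exact Or.inl h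
    · right
      split at h
      · simp at h; tauto
      · simp at h
  · rintro (h | ⟨h1, h2⟩)
    · exact Or.inl h
    · right; rw [if_pos h1]; simp [h2]

/-- characterization of the second component of the product automaton -/
lemma pa_evalFrom_snd_mem (w : List (Fin 2)) (s : Fin m × Finset (Fin n)) (q : Fin n) :
    q ∈ ((pa m n).evalFrom s w).2 ↔
      (∃ q0 ∈ s.2, (A2 n).evalFrom q0 w = q) ∨
      (∃ u v, w = u ++ v ∧ u ≠ [] ∧ (A1 m).evalFrom s.1 u = lst m ∧
        (A2 n).evalFrom (A2 n).start v = q) := by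
  induction w generalizing s with
  | nil =>
    simp only [DFA.evalFrom, List.foldl_nil]
    constructor
    · intro h; exact Or.inl ⟨q, h, rfl⟩
    · rintro (⟨q0, h1, h2⟩ | ⟨u, v, h1, h2, _⟩)
      · rwa [← h2]
      · exact absurd (List.append_eq_nil_iff.mp h1.symm).1 h2
  | cons x w ih =>
    rw [pa_evalFrom_cons, ih]
    constructor
    · rintro (⟨q0, hq0, hev⟩ | ⟨u, v, h1, h2, h3, h4⟩)
      · rw [pa_step_snd_mem] at hq0
        rcases hq0 with ⟨q1, hq1, hst⟩ | ⟨hlst, hq0⟩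
        · exact Or.inl ⟨q1, hq1, by rw [A2_evalFrom_cons, hst, hev]⟩
        · right
          refine ⟨[x], w, rfl, by simp, ?_, by rw [hq0] at hev; exact hev⟩
          simpa [A1_evalFrom_cons, DFA.evalFrom] using hlst
      · right
        refine ⟨x :: u, v, by rw [h1]; rfl, by simp, ?_, h4⟩
        rw [A1_evalFrom_cons, ← pa_step_fst]; exact h3
    · rintro (⟨q0, hq0, hev⟩ | ⟨u, v, h1, h2, h3, h4⟩)
      · left
        rw [A2_evalFrom_cons] at hev
        exact ⟨(A2 n).step q0 x, by rw [pa_step_snd_mem]; exact Or.inl ⟨q0, hq0, rfl⟩, hev⟩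
      · rcases u with _ | ⟨y, u⟩
        · exact absurd rfl h2
        · -- x :: w = (y :: u) ++ v, so y = x, w = u ++ v
          obtain ⟨rfl, rfl⟩ : y = x ∧ w = u ++ v := by
            constructor
            · exact (List.cons_eq_cons.mp h1).1.symm
            · exact (List.cons_eq_cons.mp h1).2
          rcases u with _ | ⟨z, u⟩
          · -- u = []: insertion now
            left
            refine ⟨(A2 n).start, ?_, by simpa using h4⟩
            rw [pa_step_snd_mem]
            right
            exact ⟨by simpa [A1_evalFrom_cons, DFA.evalFrom] using h3, rfl⟩
          · right
            refine ⟨z :: u, v, rfl, by simp, ?_, h4⟩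
            rw [A1_evalFrom_cons] at h3
            rw [← pa_step_fst] at h3
            exact h3

lemma start_not_accept_A1 (hm : 3 ≤ m) : ¬((A1 m).start = lst m) := by
  intro h
  have := congrArg Fin.val h
  simp [A1, dfaW1, lst] at this
  omega

lemma mem_L1_iff (u : List (Fin 2)) : u ∈ (A1 m).accepts ↔ (A1 m).evalFrom (A1 m).start u = lst m := by
  rw [DFA.mem_accepts]
  constructor
  · intro h; simpa [A1, dfaW1, lst, DFA.eval] using h
  · intro h; simp only [A1, dfaW1, DFA.eval] at *; rw [h]; rfl

lemma mem_L2_iff (v : List (Fin 2)) : v ∈ (A2 n).accepts ↔ (A2 n).evalFrom (A2 n).start v = lst n := by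
  rw [DFA.mem_accepts]
  constructor
  · intro h; simpa [A2, dfaW2, lst, DFA.eval] using h
  · intro h; simp only [A2, dfaW2, DFA.eval] at *; rw [h]; rfl

theorem pa_accepts (hm : 3 ≤ m) (hn : 3 ≤ n) :
    (pa m n).accepts = (A1 m).accepts * (A2 n).accepts := by
  ext w
  rw [DFA.mem_accepts, Language.mem_mul]
  have : (pa m n).eval w ∈ (pa m n).accept ↔ lst n ∈ ((pa m n).evalFrom (pa m n).start w).2 := Iff.rfl
  rw [this, pa_evalFrom_snd_mem]
  constructor
  · rintro (⟨q0, hq0, _⟩ | ⟨u, v, h1, _, h3, h4⟩)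
    · simp [pa] at hq0
    · exact ⟨u, (mem_L1_iff u).mpr h3, v, (mem_L2_iff v).mpr h4, h1.symm⟩
  · rintro ⟨u, hu, v, hv, rfl⟩
    right
    refine ⟨u, v, rfl, ?_, (mem_L1_iff u).mp hu, (mem_L2_iff v).mp hv⟩
    rintro rfl
    rw [mem_L1_iff] at hu
    exact start_not_accept_A1 hm (by simpa [DFA.evalFrom] using hu)

end pa
end BrzWit
namespace BrzWit
section sub
variable {m n : ℕ} [NeZero m] [NeZero n]

def ValidSt (m n : ℕ) [NeZero m] [NeZero n] : Type :=
  {ps : Fin m × Finset (Fin n) // ps.1 = lst m → (A2 n).start ∈ ps.2}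

instance : Fintype (ValidSt m n) := Subtype.fintype _
instance : DecidableEq (ValidSt m n) := Subtype.instDecidableEq

def paSub (m n : ℕ) [NeZero m] [NeZero n] (hm : 2 ≤ m) : DFA (Fin 2) (ValidSt m n) where
  step := fun s x => ⟨(pa m n).step s.val x, by
    intro h
    simp only [pa]
    rw [if_pos (by exact h)]
    simp⟩
  start := ⟨(pa m n).start, by
    intro h
    exfalso
    have h2 : (0 : ℕ) = m - 1 := congrArg Fin.val h
    omega⟩
  accept := {s | lst n ∈ s.val.2}

lemma paSub_evalFrom (hm : 2 ≤ m) (s : ValidSt m n) (w : List (Fin 2)) :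
    ((paSub m n hm).evalFrom s w).val = (pa m n).evalFrom s.val w := by
  induction w generalizing s with
  | nil => rfl
  | cons x w ih =>
    rw [show (paSub m n hm).evalFrom s (x :: w) = (paSub m n hm).evalFrom ((paSub m n hm).step s x) w from rfl,
      pa_evalFrom_cons, ih]
    rfl

lemma paSub_accepts (hm : 2 ≤ m) : (paSub m n hm).accepts = (pa m n).accepts := by
  ext w
  rw [DFA.mem_accepts, DFA.mem_accepts]
  show lst n ∈ ((paSub m n hm).evalFrom (paSub m n hm).start w).val.2 ↔
    lst n ∈ ((pa m n).evalFrom (pa m n).start w).2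
  rw [paSub_evalFrom hm]
  rfl

/-- counting: the subtype of sets containing a fixed element has size `2^(n-1)` -/
lemma card_finset_mem (a : Fin n) (hn : 0 < n) :
    Fintype.card {S : Finset (Fin n) // a ∈ S} = 2 ^ (n - 1) := by
  classical
  have e : {S : Finset (Fin n) // a ∈ S} ≃ {S : Finset (Fin n) // a ∉ S} :=
    { toFun := fun S => ⟨S.val.erase a, Finset.notMem_erase a S.val⟩
      invFun := fun S => ⟨insert a S.val, Finset.mem_insert_self a S.val⟩
      left_inv := fun S => by simp [Finset.insert_erase S.property]
      right_inv := fun S => by simp [Finset.erase_insert S.property] }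
  have h1 : Fintype.card {S : Finset (Fin n) // a ∉ S}
      = Fintype.card (Finset (Fin n)) - Fintype.card {S : Finset (Fin n) // a ∈ S} :=
    Fintype.card_subtype_compl _
  have h2 := Fintype.card_congr e
  rw [h1] at h2
  have h3 : Fintype.card (Finset (Fin n)) = 2 ^ n := by
    rw [Fintype.card_finset, Fintype.card_fin]
  rw [h3] at h2
  have h4 : Fintype.card {S : Finset (Fin n) // a ∈ S} ≤ 2 ^ n := by
    rw [← h3]; exact Fintype.card_subtype_le _
  have h5 : 2 ^ n = 2 * 2 ^ (n - 1) := by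
    rw [← pow_succ']
    congr 1
    omega
  omega

lemma card_validSt (hm : 3 ≤ m) (hn : 3 ≤ n) :
    Fintype.card (ValidSt m n) = m * 2 ^ n - 2 ^ (n - 1) := by
  classical
  have hcompl : Fintype.card {ps : Fin m × Finset (Fin n) // ¬(ps.1 = lst m → (A2 n).start ∈ ps.2)}
      = 2 ^ (n - 1) := by
    have e : {ps : Fin m × Finset (Fin n) // ¬(ps.1 = lst m → (A2 n).start ∈ ps.2)}
        ≃ {S : Finset (Fin n) // (A2 n).start ∉ S} :=
      { toFun := fun s => ⟨s.val.2, fun h => s.property (fun _ => h)⟩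
        invFun := fun S => ⟨(lst m, S.val), by intro h; exact absurd (h rfl) S.property⟩
        left_inv := fun s => by
          obtain ⟨⟨p, S⟩, hs⟩ := s
          push_neg at hs
          exact Subtype.ext (Prod.ext hs.1.symm rfl)
        right_inv := fun S => rfl }
    rw [Fintype.card_congr e]
    have h1 : Fintype.card {S : Finset (Fin n) // (A2 n).start ∉ S}
        = Fintype.card (Finset (Fin n)) - Fintype.card {S : Finset (Fin n) // (A2 n).start ∈ S} :=
      Fintype.card_subtype_compl _
    rw [h1, card_finset_mem _ (by omega), Fintype.card_finset, Fintype.card_fin]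
    have h5 : 2 ^ n = 2 * 2 ^ (n - 1) := by
      rw [← pow_succ']
      congr 1
      omega
    omega
  have hkey := Fintype.card_subtype_compl (fun ps : Fin m × Finset (Fin n) => ps.1 = lst m → (A2 n).start ∈ ps.2)
  have hle := Fintype.card_subtype_le (fun ps : Fin m × Finset (Fin n) => ps.1 = lst m → (A2 n).start ∈ ps.2)
  have hVP : Fintype.card (ValidSt m n)
      = Fintype.card {ps : Fin m × Finset (Fin n) // ps.1 = lst m → (A2 n).start ∈ ps.2} :=
    Fintype.card_congr (Equiv.refl _)
  have hprod : Fintype.card (Fin m × Finset (Fin n)) = m * 2 ^ n := by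
    rw [Fintype.card_prod, Fintype.card_fin, Fintype.card_finset, Fintype.card_fin]
  rw [hprod] at hkey hle
  rw [hcompl] at hkey
  have h5 : 2 ^ n ≥ 2 ^ (n - 1) := Nat.pow_le_pow_right (by omega) (by omega)
  have h6 : m * 2 ^ n ≥ 1 * 2 ^ n := Nat.mul_le_mul_right _ (by omega)
  omega

end sub
end BrzWit
namespace BrzWit

lemma mod_two_ranges (a M : ℕ) (h : 0 < M) (h2 : a < 2 * M) :
    a % M = if a < M then a else a - M := by
  rcases Nat.lt_or_ge a M with h3 | h3
  · rw [if_pos h3, Nat.mod_eq_of_lt h3]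
  · rw [if_neg (by omega), Nat.mod_eq_sub_mod h3, Nat.mod_eq_of_lt (by omega)]

lemma sc_le {L : Language (Fin 2)} (Q : Type) [Fintype Q] (D : DFA (Fin 2) Q)
    (h : D.accepts = L) : sc L ≤ Fintype.card Q :=
  Nat.sInf_le ⟨Q, inferInstance, D, h, rfl⟩

lemma le_sc {L : Language (Fin 2)} (N : ℕ) (Q : Type) [Fintype Q] (D : DFA (Fin 2) Q)
    (h : D.accepts = L)
    (hlb : ∀ (Q' : Type) (_ : Fintype Q') (D' : DFA (Fin 2) Q'), D'.accepts = L → N ≤ Fintype.card Q') :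
    N ≤ sc L := by
  unfold sc
  have hmem : Fintype.card Q ∈ {c | ∃ (Q : Type) (_ : Fintype Q) (D : DFA (Fin 2) Q), D.accepts = L ∧ Fintype.card Q = c} :=
    ⟨Q, inferInstance, D, h, rfl⟩
  apply le_csInf ⟨Fintype.card Q, hmem⟩
  rintro c ⟨Q', hQ', D', h1, rfl⟩
  exact hlb Q' hQ' D' h1

lemma family_le_card {L : Language (Fin 2)} {ι : Type} [Fintype ι] (f : ι → List (Fin 2))
    (hf : ∀ s t : ι, s ≠ t → ¬ (∀ z, f s ++ z ∈ L ↔ f t ++ z ∈ L))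
    (Q : Type) [Fintype Q] (D : DFA (Fin 2) Q) (hD : D.accepts = L) :
    Fintype.card ι ≤ Fintype.card Q := by
  apply Fintype.card_le_of_injective (fun s => D.eval (f s))
  intro s t h
  by_contra hne
  apply hf s t hne
  intro z
  rw [← hD, DFA.mem_accepts, DFA.mem_accepts]
  show D.evalFrom D.start (f s ++ z) ∈ D.accept ↔ D.evalFrom D.start (f t ++ z) ∈ D.accept
  rw [DFA.evalFrom_of_append, DFA.evalFrom_of_append]
  have : D.evalFrom D.start (f s) = D.evalFrom D.start (f t) := h
  rw [this]

section parts12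
variable {m n : ℕ} [NeZero m] [NeZero n]

lemma mem_L1_wa (K : ℕ) (hm : 3 ≤ m) : wa K ∈ (A1 m).accepts ↔ K % m = m - 1 := by
  rw [mem_L1_iff, A1_evalFrom_wa _ _ hm]
  rw [Fin.ext_iff]
  have h1 : ((A1 m).start + (K : Fin m)).val = K % m := by
    rw [Fin.add_def, val_natCast']
    show (0 + K % m) % m = K % m
    rw [Nat.zero_add, Nat.mod_mod_of_dvd _ dvd_rfl]
  rw [h1]
  rfl

lemma mem_L2_wa (K : ℕ) (hn : 3 ≤ n) : wa K ∈ (A2 n).accepts ↔ K % n = n - 1 := by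
  rw [mem_L2_iff, A2_evalFrom_wa _ _ hn]
  rw [Fin.ext_iff]
  have h1 : ((A2 n).start + (K : Fin n)).val = K % n := by
    rw [Fin.add_def, val_natCast']
    show (0 + K % n) % n = K % n
    rw [Nat.zero_add, Nat.mod_mod_of_dvd _ dvd_rfl]
  rw [h1]
  rfl

theorem sc_L1 (hm : 3 ≤ m) : sc (A1 m).accepts = m := by
  apply le_antisymm
  · have := sc_le (Fin m) (A1 m) rfl
    rwa [Fintype.card_fin] at this
  · have hlb : ∀ (Q' : Type) (_ : Fintype Q') (D' : DFA (Fin 2) Q'),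
        D'.accepts = (A1 m).accepts → m ≤ Fintype.card Q' := by
      intro Q' hQ' D' hD'
      have := family_le_card (L := (A1 m).accepts) (ι := Fin m) (fun i => wa i.val) ?_ Q' D' hD'
      · rwa [Fintype.card_fin] at this
      · intro s t hne hall
        have hs := s.isLt
        have ht := t.isLt
        have h := hall (wa (m - 1 - t.val))
        rw [← wa_append, ← wa_append, mem_L1_wa _ hm, mem_L1_wa _ hm] at h
        have h2 : (t.val + (m - 1 - t.val)) % m = m - 1 := by
          rw [Nat.mod_eq_of_lt (by omega)]
          omega
        have h3 := h.mpr h2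
        rw [mod_two_ranges _ _ (by omega) (by omega)] at h3
        apply hne
        apply Fin.ext
        split at h3 <;> omega
    exact le_sc m (Fin m) (A1 m) rfl hlb

theorem sc_L2 (hn : 3 ≤ n) : sc (A2 n).accepts = n := by
  apply le_antisymm
  · have := sc_le (Fin n) (A2 n) rfl
    rwa [Fintype.card_fin] at this
  · have hlb : ∀ (Q' : Type) (_ : Fintype Q') (D' : DFA (Fin 2) Q'),
        D'.accepts = (A2 n).accepts → n ≤ Fintype.card Q' := by
      intro Q' hQ' D' hD'
      have := family_le_card (L := (A2 n).accepts) (ι := Fin n) (fun i => wa i.val) ?_ Q' D' hD'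
      · rwa [Fintype.card_fin] at this
      · intro s t hne hall
        have hs := s.isLt
        have ht := t.isLt
        have h := hall (wa (n - 1 - t.val))
        rw [← wa_append, ← wa_append, mem_L2_wa _ hn, mem_L2_wa _ hn] at h
        have h2 : (t.val + (n - 1 - t.val)) % n = n - 1 := by
          rw [Nat.mod_eq_of_lt (by omega)]
          omega
        have h3 := h.mpr h2
        rw [mod_two_ranges _ _ (by omega) (by omega)] at h3
        apply hne
        apply Fin.ext
        split at h3 <;> omega
    exact le_sc n (Fin n) (A2 n) rfl hlb

end parts12
end BrzWit
namespace BrzWit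
section disting
variable {m n : ℕ} [NeZero m] [NeZero n]

lemma fin_val_add (a b : Fin n) : (a + b).val = (a.val + b.val) % n := by
  rw [Fin.add_def]

lemma pa_snd_superset {s : Fin m × Finset (Fin n)} {q0 : Fin n} (w : List (Fin 2))
    (h : q0 ∈ s.2) : (A2 n).evalFrom q0 w ∈ ((pa m n).evalFrom s w).2 := by
  rw [pa_evalFrom_snd_mem]
  exact Or.inl ⟨q0, h, rfl⟩

lemma pa_snd_bound {s : Fin m × Finset (Fin n)} {v : Fin n} {L : ℕ} (hL : L < n)
    (h : v ∈ ((pa m n).evalFrom s (wa L)).2) (hn : 3 ≤ n) :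
    (∃ q0 ∈ s.2, q0 + (L : Fin n) = v) ∨ v.val < L := by
  rw [pa_evalFrom_snd_mem] at h
  rcases h with ⟨q0, h1, h2⟩ | ⟨u, v', h1, h2, _, h4⟩
  · rw [A2_evalFrom_wa _ _ hn] at h2
    exact Or.inl ⟨q0, h1, h2⟩
  · right
    have hlen : u.length + v'.length = L := by
      have := congrArg List.length h1
      simpa [wa] using this.symm
    have hv' : v' = wa (L - u.length) := by
      have h5 : v' = (wa L).drop u.length := by rw [h1]; simp
      rw [h5, wa, wa, List.drop_replicate]
    rw [hv', A2_evalFrom_wa _ _ hn] at h4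
    have h6 : v.val = (L - u.length) % n := by
      rw [← h4, fin_val_add, val_natCast']
      show (0 + (L - u.length) % n) % n = _
      rw [Nat.zero_add, Nat.mod_mod_of_dvd _ dvd_rfl]
    have h7 : u.length ≠ 0 := fun hc => h2 (List.eq_nil_of_length_eq_zero hc)
    rw [h6, Nat.mod_eq_of_lt (by omega)]
    omega

lemma distinguish_diffset {s t : Fin m × Finset (Fin n)} {q : Fin n}
    (hq1 : q ∈ s.2) (hq2 : q ∉ t.2) (hn : 3 ≤ n) :
    ∃ z, lst n ∈ ((pa m n).evalFrom s z).2 ∧ lst n ∉ ((pa m n).evalFrom t z).2 := by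
  have hqlt := q.isLt
  have hqL : q + ((n - 1 - q.val : ℕ) : Fin n) = lst n := by
    apply Fin.ext
    rw [fin_val_add, val_natCast', Nat.mod_eq_of_lt (show n - 1 - q.val < n by omega),
      Nat.mod_eq_of_lt (by omega)]
    show q.val + (n - 1 - q.val) = n - 1
    omega
  refine ⟨wa (n - 1 - q.val), ?_, ?_⟩
  · have := pa_snd_superset (s := s) (wa (n - 1 - q.val)) hq1
    rwa [A2_evalFrom_wa _ _ hn, hqL] at this
  · intro hmem
    rcases pa_snd_bound (by omega) hmem hn with ⟨q0, h1, h2⟩ | h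
    · have hq0 := q0.isLt
      have h3 : (q0.val + (n - 1 - q.val) % n) % n = n - 1 := by
        have := congrArg Fin.val h2
        rwa [fin_val_add, val_natCast'] at this
      rw [Nat.mod_eq_of_lt (show n - 1 - q.val < n by omega),
        mod_two_ranges _ _ (by omega) (by omega)] at h3
      have : q0 = q := by apply Fin.ext; split at h3 <;> omega
      rw [this] at h1
      exact hq2 h1
    · have : (lst n).val = n - 1 := rfl
      omega

lemma A1_step_injective (x : Fin 2) (hm : 3 ≤ m) : Function.Injective ((A1 m).step · x) := by
  intro p p' hh
  have h : (A1 m).step p x = (A1 m).step p' x := hh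
  have h2 : x = 0 ∨ x = 1 := by omega
  rcases h2 with rfl | rfl
  · rw [A1_step_a _ hm, A1_step_a _ hm] at h
    exact add_right_cancel h
  · have hv : ((A1 m).step p 1).val = ((A1 m).step p' 1).val := congrArg Fin.val h
    rw [A1_step_b_val, A1_step_b_val] at hv
    have hp := p.isLt
    have hp' := p'.isLt
    rw [Nat.mod_eq_of_lt (show (if p.val = 0 then 1 else if p.val = 1 then 0 else p.val) < m by
        split_ifs <;> omega),
      Nat.mod_eq_of_lt (show (if p'.val = 0 then 1 else if p'.val = 1 then 0 else p'.val) < m by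
        split_ifs <;> omega)] at hv
    apply Fin.ext
    split_ifs at hv <;> omega

lemma A1_evalFrom_injective (w : List (Fin 2)) (hm : 3 ≤ m) :
    Function.Injective (fun p : Fin m => (A1 m).evalFrom p w) := by
  induction w with
  | nil => intro p p' h; exact h
  | cons x w ih =>
    intro p p' h
    simp only [A1_evalFrom_cons] at h
    exact A1_step_injective x hm (ih h)

lemma pa_evalFrom_append_snd (s : Fin m × Finset (Fin n)) (w : List (Fin 2)) (x : Fin 2) :
    ((pa m n).evalFrom s (w ++ [x])).2 =
      (((pa m n).evalFrom s w).2.image ((A2 n).step · x)) ∪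
        (if (A1 m).evalFrom s.1 (w ++ [x]) = lst m then {(A2 n).start} else ∅) := by
  rw [DFA.evalFrom_append_singleton]
  show ((pa m n).step ((pa m n).evalFrom s w) x).2 = _
  have h1 : ((pa m n).step ((pa m n).evalFrom s w) x).2
      = (((pa m n).evalFrom s w).2.image ((A2 n).step · x)) ∪
        (if (A1 m).step (((pa m n).evalFrom s w).1) x = lst m then {(A2 n).start} else ∅) := rfl
  rw [h1, pa_evalFrom_fst, ← DFA.evalFrom_append_singleton]

lemma evolution {i j : Fin m} {S : Finset (Fin n)} (hm : 3 ≤ m) (hn : 3 ≤ n) (hij : i ≠ j)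
    (hres : ∀ z, lst n ∈ ((pa m n).evalFrom (i, S) z).2 ↔ lst n ∈ ((pa m n).evalFrom (j, S) z).2) :
    ∀ w, ((pa m n).evalFrom (i, S) w).2 = S.image ((A2 n).evalFrom · w) ∧
         ((pa m n).evalFrom (j, S) w).2 = S.image ((A2 n).evalFrom · w) := by
  have hsets : ∀ w, ((pa m n).evalFrom (i, S) w).2 = ((pa m n).evalFrom (j, S) w).2 := by
    intro w
    by_contra hne
    have h1 : ¬(((pa m n).evalFrom (i, S) w).2 ⊆ ((pa m n).evalFrom (j, S) w).2) ∨
        ¬(((pa m n).evalFrom (j, S) w).2 ⊆ ((pa m n).evalFrom (i, S) w).2) := by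
      by_contra h
      push_neg at h
      exact hne (Finset.Subset.antisymm h.1 h.2)
    rcases h1 with h1 | h1 <;> obtain ⟨q, hq1, hq2⟩ := Finset.not_subset.mp h1 <;>
      obtain ⟨z, hz1, hz2⟩ := distinguish_diffset hq1 hq2 hn <;>
      have hzz := hres (w ++ z) <;>
      rw [DFA.evalFrom_of_append, DFA.evalFrom_of_append] at hzz
    · exact hz2 (hzz.mp hz1)
    · exact hz2 (hzz.mpr hz1)
  intro w
  induction w using List.reverseRecOn with
  | nil =>
    have hid : (fun q : Fin n => (A2 n).evalFrom q ([] : List (Fin 2))) = fun q => q := rfl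
    constructor <;> · show S = S.image _; rw [hid, Finset.image_id']
  | append_singleton w x ih =>
    have himg : (S.image ((A2 n).evalFrom · w)).image ((A2 n).step · x)
        = S.image ((A2 n).evalFrom · (w ++ [x])) := by
      rw [Finset.image_image]
      apply Finset.image_congr
      intro q _
      exact (DFA.evalFrom_append_singleton _ _ _ _).symm
    have hcomp_ne : (A1 m).evalFrom i (w ++ [x]) ≠ (A1 m).evalFrom j (w ++ [x]) :=
      fun hc => hij (A1_evalFrom_injective (w ++ [x]) hm hc)
    have hfi := pa_evalFrom_append_snd (i, S) w x
    have hfj := pa_evalFrom_append_snd (j, S) w x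
    rw [ih.1, himg] at hfi
    rw [ih.2, himg] at hfj
    by_cases hci : (A1 m).evalFrom i (w ++ [x]) = lst m
    · have hcj : ¬((A1 m).evalFrom j (w ++ [x]) = lst m) := fun hc => hcomp_ne (hci.trans hc.symm)
      rw [if_neg hcj, Finset.union_empty] at hfj
      rw [if_pos hci] at hfi
      have habs : S.image ((A2 n).evalFrom · (w ++ [x])) ∪ {(A2 n).start}
          = S.image ((A2 n).evalFrom · (w ++ [x])) := by
        rw [← hfi, hsets (w ++ [x]), hfj]
      exact ⟨hfi.trans habs, hfj⟩
    · rw [if_neg hci, Finset.union_empty] at hfi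
      by_cases hcj : (A1 m).evalFrom j (w ++ [x]) = lst m
      · rw [if_pos hcj] at hfj
        have habs : S.image ((A2 n).evalFrom · (w ++ [x])) ∪ {(A2 n).start}
            = S.image ((A2 n).evalFrom · (w ++ [x])) := by
          rw [← hfj, ← hsets (w ++ [x]), hfi]
        exact ⟨hfi, hfj.trans habs⟩
      · rw [if_neg hcj, Finset.union_empty] at hfj
        exact ⟨hfi, hfj⟩

end disting
end BrzWit
namespace BrzWit
section samefalse
variable {m n : ℕ} [NeZero m] [NeZero n]

lemma same_set_false (hm : 3 ≤ m) (hn : 3 ≤ n) {i j : Fin m} {S : Finset (Fin n)} (hij : i ≠ j)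
    (hres : ∀ z, lst n ∈ ((pa m n).evalFrom (i, S) z).2 ↔ lst n ∈ ((pa m n).evalFrom (j, S) z).2) :
    False := by
  have hdpos : 0 < Nat.gcd n m := Nat.gcd_pos_of_pos_left m (by omega)
  set d := Nat.gcd n m with hd
  have hdm : d ∣ m := Nat.gcd_dvd_right n m
  have hdn : d ∣ n := Nat.gcd_dvd_left n m
  have hdlem : d ≤ m := Nat.le_of_dvd (by omega) hdm
  set cstar := (m * (n + 1) - n) % d with hcstar
  have hcstar_lt : cstar < d := Nat.mod_lt _ hdpos
  obtain ⟨r, hrle, hrmod⟩ :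
      ∃ r : ℕ, r ≤ m - 1 ∧ (if r = 0 then 1 else if r = 1 then 0 else r) ≡ cstar [MOD d] := by
    by_cases hcase : d ≤ m - 2
    · refine ⟨2 + (cstar + 2 * d - 2) % d,
        by have := Nat.mod_lt (cstar + 2 * d - 2) hdpos; omega, ?_⟩
      rw [if_neg (by omega), if_neg (by omega)]
      calc 2 + (cstar + 2 * d - 2) % d
          ≡ 2 + (cstar + 2 * d - 2) [MOD d] := Nat.ModEq.add_left 2 (Nat.mod_modEq _ _)
        _ = cstar + 2 * d := by omega
        _ ≡ cstar [MOD d] := by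
            symm
            apply (Nat.modEq_iff_dvd' (by omega)).mpr
            exact ⟨2, by omega⟩
    · have hdm2 : d = m := by
        obtain ⟨k, hk⟩ := hdm
        rcases k with _ | _ | k
        · omega
        · omega
        · have h2 : d * 2 ≤ d * (k + 1 + 1) := Nat.mul_le_mul_left d (by omega)
          omega
      by_cases hc2 : 2 ≤ cstar
      · exact ⟨cstar, by omega, by rw [if_neg (by omega), if_neg (by omega)]⟩
      · by_cases hc0 : cstar = 0
        · refine ⟨1, by omega, ?_⟩
          rw [if_neg (by omega), if_pos rfl, hc0]
        · refine ⟨0, by omega, ?_⟩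
          rw [if_pos rfl]
          have h3 : cstar = 1 := by omega
          rw [h3]
  set σr := (if r = 0 then 1 else if r = 1 then 0 else r) with hσr
  have hσr_le : σr ≤ m - 1 := by rw [hσr]; split_ifs <;> omega
  have hcomp : (n - 1) ≡ (m - 1 - σr) [MOD d] := by
    have e3 : d ∣ m * n := Dvd.dvd.mul_left hdn m
    have h01 : cstar ≡ m * (n + 1) - n [MOD d] := Nat.mod_modEq _ _
    have key : n + cstar ≡ m [MOD d] := by
      have hmn : m * (n + 1) = m * n + m := by ring
      have hmge : n + 1 ≤ m * (n + 1) := Nat.le_mul_of_pos_left _ (by omega)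
      calc n + cstar ≡ n + (m * (n + 1) - n) [MOD d] := Nat.ModEq.add_left n h01
        _ = m + m * n := by omega
        _ ≡ m + 0 [MOD d] := Nat.ModEq.add_left m (Nat.modEq_zero_iff_dvd.mpr e3)
        _ = m := by omega
    have key2 : (n - 1) + (σr + 1) ≡ (m - 1 - σr) + (σr + 1) [MOD d] := by
      have e5 : (n - 1) + (σr + 1) = n + σr := by omega
      have e6 : (m - 1 - σr) + (σr + 1) = m := by omega
      rw [e5, e6]
      calc n + σr ≡ n + cstar [MOD d] := Nat.ModEq.add_left n hrmod
        _ ≡ m [MOD d] := key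
    exact Nat.ModEq.add_right_cancel' _ key2
  obtain ⟨hu_n, hu_m⟩ := (Nat.chineseRemainder' hcomp).2
  set u := (Nat.chineseRemainder' hcomp).val with hu
  have hu_n' : u % n = n - 1 := by
    have := hu_n
    unfold Nat.ModEq at this
    rwa [Nat.mod_eq_of_lt (show n - 1 < n by omega)] at this
  have hu_m' : u % m = m - 1 - σr := by
    have := hu_m
    unfold Nat.ModEq at this
    rwa [Nat.mod_eq_of_lt (show m - 1 - σr < m by omega)] at this
  have hu1 : 1 ≤ u := by
    rcases Nat.eq_zero_or_pos u with h | h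
    · rw [h] at hu_n'; simp at hu_n'; omega
    · omega
  have hjlt := j.isLt
  set t := (m + r - j.val) % m with ht
  have htlt : t < m := Nat.mod_lt _ (by omega)
  have hjt : (j.val + t) % m = r := by
    show (j.val + ((m + r - j.val) % m)) % m = r
    rcases Nat.lt_or_ge (m + r - j.val) m with hcase | hcase
    · rw [Nat.mod_eq_of_lt hcase, show j.val + (m + r - j.val) = m + r from by omega,
        mod_two_ranges (m + r) m (by omega) (by omega)]
      split_ifs <;> omega
    · have hsub : (m + r - j.val) % m = m + r - j.val - m := by
        rw [Nat.mod_eq_sub_mod hcase, Nat.mod_eq_of_lt (by omega)]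
      rw [hsub, show j.val + (m + r - j.val - m) = r from by omega, Nat.mod_eq_of_lt (by omega)]
  set wstar := (wa t ++ [(1 : Fin 2)] ++ wa (u - 1)) ++ [(0 : Fin 2)] with hwstar
  have hlist : wstar = wa t ++ [(1 : Fin 2)] ++ wa u := by
    rw [hwstar]
    have h4 : wa u = wa (u - 1) ++ [(0 : Fin 2)] := by
      rw [← wa_succ']
      congr 1
      omega
    rw [h4]
    simp [List.append_assoc]
  have hval_jt : (j + (t : Fin m)).val = r := by
    rw [fin_val_add, val_natCast', Nat.mod_eq_of_lt htlt, hjt]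
  have hstepb : ((A1 m).step (j + (t : Fin m)) 1).val = σr := by
    rw [A1_step_b_val, hval_jt, hσr]
    exact Nat.mod_eq_of_lt (by split_ifs <;> omega)
  have hcompj : (A1 m).evalFrom j wstar = lst m := by
    rw [hlist, DFA.evalFrom_of_append, DFA.evalFrom_of_append, A1_evalFrom_wa j t hm,
      show (A1 m).evalFrom (j + (t : Fin m)) [(1 : Fin 2)] = (A1 m).step (j + (t : Fin m)) 1 from rfl,
      A1_evalFrom_wa _ u hm]
    apply Fin.ext
    rw [fin_val_add, val_natCast', hstepb, hu_m']
    show (σr + (m - 1 - σr)) % m = (lst m).val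
    rw [show σr + (m - 1 - σr) = m - 1 by omega, Nat.mod_eq_of_lt (by omega)]
    rfl
  have hz0 : (A2 n).start ∈ ((pa m n).evalFrom (j, S) wstar).2 := by
    rw [hwstar, pa_evalFrom_append_snd]
    apply Finset.mem_union_right
    rw [show (j, S).1 = j from rfl, ← hwstar, if_pos hcompj]
    exact Finset.mem_singleton_self _
  have hevo := (evolution hm hn hij hres wstar).2
  rw [hevo] at hz0
  obtain ⟨q, hq, heq⟩ := Finset.mem_image.mp hz0
  have hef2 : ((A2 n).evalFrom q wstar).val
      = (((A2 n).step (q + (t : Fin n)) 1).val + u % n) % n := by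
    rw [hlist, DFA.evalFrom_of_append, DFA.evalFrom_of_append, A2_evalFrom_wa q t hn,
      show (A2 n).evalFrom (q + (t : Fin n)) [(1 : Fin 2)] = (A2 n).step (q + (t : Fin n)) 1 from rfl,
      A2_evalFrom_wa _ u hn, fin_val_add, val_natCast']
  have hlast : (((A2 n).step (q + (t : Fin n)) 1).val + u % n) % n = 0 := by
    rw [← hef2]
    show _ = ((A2 n).start).val
    exact congrArg Fin.val heq
  rw [hu_n'] at hlast
  have hcv := ((A2 n).step (q + (t : Fin n)) 1).isLt
  have hcne := A2_step_b_ne_one (q + (t : Fin n)) hn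
  rw [mod_two_ranges _ _ (by omega) (by omega)] at hlast
  split_ifs at hlast <;> omega

/-- the master lemma: distinct product states have distinct residuals -/
lemma residual_ne (hm : 3 ≤ m) (hn : 3 ≤ n) {s t : Fin m × Finset (Fin n)} (hst : s ≠ t) :
    ¬(∀ z, lst n ∈ ((pa m n).evalFrom s z).2 ↔ lst n ∈ ((pa m n).evalFrom t z).2) := by
  intro hres
  by_cases hsets : s.2 = t.2
  · have hfst : s.1 ≠ t.1 := by
      intro h
      exact hst (Prod.ext h hsets)
    have hres' : ∀ z, lst n ∈ ((pa m n).evalFrom (s.1, s.2) z).2 ↔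
        lst n ∈ ((pa m n).evalFrom (t.1, s.2) z).2 := by
      intro z
      have h1 : (s.1, s.2) = s := rfl
      have h2 : (t.1, s.2) = t := by rw [hsets]
      rw [h1, h2]
      exact hres z
    exact same_set_false hm hn hfst hres'
  · have h1 : ¬(s.2 ⊆ t.2) ∨ ¬(t.2 ⊆ s.2) := by
      by_contra h
      push_neg at h
      exact hsets (Finset.Subset.antisymm h.1 h.2)
    rcases h1 with h1 | h1
    · obtain ⟨q, hq1, hq2⟩ := Finset.not_subset.mp h1
      obtain ⟨z, hz1, hz2⟩ := distinguish_diffset hq1 hq2 hn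
      exact hz2 ((hres z).mp hz1)
    · obtain ⟨q, hq1, hq2⟩ := Finset.not_subset.mp h1
      obtain ⟨z, hz1, hz2⟩ := distinguish_diffset hq1 hq2 hn
      exact hz2 ((hres z).mpr hz1)

end samefalse
end BrzWit
namespace BrzWit
section reach
variable {m n : ℕ} [NeZero m] [NeZero n]

lemma pa_step_eval (p : Fin m) (X : Finset (Fin n)) (x : Fin 2) :
    (pa m n).step (p, X) x =
      ((A1 m).step p x,
        X.image ((A2 n).step · x) ∪ (if (A1 m).step p x = lst m then {(A2 n).start} else ∅)) := rfl

lemma A2_start_eq : (A2 n).start = (0 : Fin n) := by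
  apply Fin.ext
  simp [A2, dfaW2]

lemma lst_ne_of_val {p : Fin m} (h : p.val ≠ m - 1) : p ≠ lst m := by
  intro hc
  exact h (congrArg Fin.val hc)

/-- run of a-letters without crossing the accepting state of A1 -/
lemma pa_wa_nocross (hm : 3 ≤ m) (hn : 3 ≤ n) (p : Fin m) (X : Finset (Fin n)) (L : ℕ)
    (h : p.val + L < m - 1) :
    (pa m n).evalFrom (p, X) (wa L)
      = (⟨p.val + L, by omega⟩, X.image (· + (L : Fin n))) := by
  induction L generalizing p X with
  | zero =>
    rw [wa_zero]
    show (p, X) = _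
    have h1 : (⟨p.val + 0, by omega⟩ : Fin m) = p := by apply Fin.ext; simp
    have h2 : X.image (· + ((0 : ℕ) : Fin n)) = X := by
      rw [show ((fun q => q + ((0:ℕ) : Fin n)) : Fin n → Fin n) = fun q => q from by
        funext q; push_cast; ring]
      exact Finset.image_id'
    rw [h1, h2]
  | succ L ih =>
    rw [wa_succ, pa_evalFrom_cons, pa_step_eval]
    have hs : (A1 m).step p 0 = ⟨p.val + 1, by omega⟩ := by
      apply Fin.ext
      rw [A1_step_a p hm, fin_val_add, val_one_of hm, Nat.mod_eq_of_lt (by omega)]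
    rw [hs, if_neg (lst_ne_of_val (by simp; omega)), Finset.union_empty,
      ih ⟨p.val + 1, by omega⟩ _ (by simp; omega)]
    rw [Prod.mk.injEq]
    constructor
    · apply Fin.ext
      simp
      omega
    · rw [Finset.image_image]
      apply Finset.image_congr
      intro q _
      show (A2 n).step q 0 + (L : Fin n) = q + ((L + 1 : ℕ) : Fin n)
      rw [A2_step_a q hn]
      push_cast
      ring

/-- the zero-state of A1 -/
lemma lst_step_a (hm : 3 ≤ m) : (A1 m).step (lst m) 0 = ⟨0, by omega⟩ := by
  apply Fin.ext
  rw [A1_step_a _ hm, fin_val_add, val_one_of hm]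
  show (m - 1 + 1) % m = 0
  rw [show m - 1 + 1 = m by omega, Nat.mod_self]

lemma m2_step_a (hm : 3 ≤ m) : (A1 m).step (⟨m - 2, by omega⟩ : Fin m) 0 = lst m := by
  apply Fin.ext
  rw [A1_step_a _ hm, fin_val_add, val_one_of hm]
  show (m - 2 + 1) % m = m - 1
  rw [Nat.mod_eq_of_lt (by omega)]
  omega

lemma one_step_b (hm : 3 ≤ m) : (A1 m).step (⟨1, by omega⟩ : Fin m) 1 = ⟨0, by omega⟩ := by
  rw [A1_step_b _ hm]
  norm_num

end reach
end BrzWit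
namespace BrzWit

/-- the loop word `(ab)^ℓ` -/
def abw : ℕ → List (Fin 2)
  | 0 => []
  | ℓ + 1 => abw ℓ ++ [0, 1]

section reach2
variable {m n : ℕ} [NeZero m] [NeZero n]

lemma image_step_a (hn : 3 ≤ n) (X : Finset (Fin n)) :
    X.image ((A2 n).step · 0) = X.image (· + (1 : Fin n)) :=
  Finset.image_congr fun q _ => A2_step_a q hn

lemma image_step_b_id (hn : 3 ≤ n) {X : Finset (Fin n)} (h1 : (1 : Fin n) ∉ X) :
    X.image ((A2 n).step · 1) = X := by
  have hpt : ∀ q ∈ X, (A2 n).step q 1 = q := by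
    intro q hq
    rw [A2_step_b q hn, if_neg ?_]
    intro hc
    have hq1 : q = 1 := by
      apply Fin.ext
      rw [hc, val_one_of hn]
    exact h1 (hq1 ▸ hq)
  calc X.image ((A2 n).step · 1) = X.image id := Finset.image_congr (fun q hq => hpt q hq)
    _ = X := Finset.image_id

theorem reachable (hm : 3 ≤ m) (hn : 3 ≤ n) :
    ∀ (k : ℕ) (i : Fin m) (S : Finset (Fin n)), S.card = k → (i = lst m → (A2 n).start ∈ S) →
    ∃ w, (pa m n).evalFrom (pa m n).start w = (i, S) := by
  intro k
  induction k with
  | zero =>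
    intro i S hcard hvalid
    rw [Finset.card_eq_zero] at hcard
    subst hcard
    have hi : i.val ≠ m - 1 := by
      intro hc
      simpa using hvalid (Fin.ext hc)
    have hilt := i.isLt
    refine ⟨wa i.val, ?_⟩
    have h0 : (pa m n).start = ((⟨0, by omega⟩ : Fin m), (∅ : Finset (Fin n))) := rfl
    rw [h0, pa_wa_nocross hm hn _ _ _ (by simp; omega), Prod.mk.injEq]
    exact ⟨Fin.ext (by simp), by simp⟩
  | succ k ih =>
    intro i S hcard hvalid
    have hilt := i.isLt
    obtain ⟨q0, hq0⟩ : S.Nonempty := by rw [← Finset.card_pos, hcard]; omega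
    set P : ℕ → Prop := fun ρ => (((i.val + ρ + 1 : ℕ) : Fin n) ∈ S) with hP
    haveI : DecidablePred P := Classical.decPred P
    have hex : ∃ ρ, P ρ := by
      refine ⟨(q0 - ((i.val + 1 : ℕ) : Fin n)).val, ?_⟩
      show (((i.val + (q0 - ((i.val + 1 : ℕ) : Fin n)).val + 1 : ℕ) : Fin n) ∈ S)
      have he : ((i.val + (q0 - ((i.val + 1 : ℕ) : Fin n)).val + 1 : ℕ) : Fin n) = q0 := by
        push_cast
        ring
      rw [he]
      exact hq0
    set r := Nat.find hex with hr
    have hPr : (((i.val + r + 1 : ℕ) : Fin n) ∈ S) := Nat.find_spec hex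
    have hmin : ∀ ρ, ρ < r → ¬ P ρ := fun ρ hρ => Nat.find_min hex hρ
    have hrlt : r < n := by
      have h6 : r ≤ (q0 - ((i.val + 1 : ℕ) : Fin n)).val := Nat.find_min' hex (by
        show P _
        rw [hP]
        have he : ((i.val + (q0 - ((i.val + 1 : ℕ) : Fin n)).val + 1 : ℕ) : Fin n) = q0 := by
          push_cast
          ring
        simp only []
        rw [he]
        exact hq0)
      have := (q0 - ((i.val + 1 : ℕ) : Fin n)).isLt
      omega
    set anchor : Fin n := ((i.val + r + 1 : ℕ) : Fin n) with hanchor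
    set T := (S.erase anchor).image (fun q => q - (anchor + 1)) with hT
    have hTcard : T.card = k := by
      rw [hT, Finset.card_image_of_injective _ sub_left_injective,
        Finset.card_erase_of_mem hPr, hcard]
      omega
    obtain ⟨w', hw'⟩ := ih ⟨m - 2, by omega⟩ T hTcard (by
      intro hc
      exact absurd (congrArg Fin.val hc) (by simp [lst]; omega))
    set st0 : Fin m := ⟨0, by omega⟩ with hst0
    set st1 : Fin m := ⟨1, by omega⟩ with hst1
    -- step 1 : from (m-2, T) read `a`, crossing into the accepting state of A1
    have e1 : (pa m n).evalFrom (⟨m - 2, by omega⟩, T) [0]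
        = (lst m, T.image (· + (1 : Fin n)) ∪ {(A2 n).start}) := by
      show (pa m n).step (⟨m - 2, by omega⟩, T) 0 = _
      rw [pa_step_eval, m2_step_a hm, if_pos rfl, image_step_a hn]
    -- step 2 : read another `a`
    have e2 : (pa m n).evalFrom (lst m, T.image (· + (1 : Fin n)) ∪ {(A2 n).start}) [0]
        = (st0, S.image (fun q => q + (1 - anchor))) := by
      show (pa m n).step _ 0 = _
      rw [pa_step_eval, lst_step_a hm, if_neg (lst_ne_of_val (by simp; omega)),
        Finset.union_empty, image_step_a hn, Prod.mk.injEq]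
      refine ⟨rfl, ?_⟩
      rw [Finset.image_union, Finset.image_singleton, Finset.image_image, Finset.image_image]
      conv_rhs => rw [← Finset.insert_erase hPr, Finset.image_insert]
      rw [Finset.insert_eq, Finset.union_comm]
      congr 1
      · congr 1
        rw [A2_start_eq]
        ring
      · apply Finset.image_congr
        intro q _
        show q - (anchor + 1) + 1 + 1 = q + (1 - anchor)
        ring
    -- the loop
    have hloop : ∀ ℓ, ℓ ≤ r →
        (pa m n).evalFrom (st0, S.image (fun q => q + (1 - anchor))) (abw ℓ)
          = (st0, S.image (fun q => q + (1 - anchor) + (ℓ : Fin n))) := by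
      intro ℓ
      induction ℓ with
      | zero =>
        intro _
        show (st0, _) = _
        rw [Prod.mk.injEq]
        refine ⟨rfl, Finset.image_congr fun q _ => ?_⟩
        show q + (1 - anchor) = q + (1 - anchor) + ((0 : ℕ) : Fin n)
        push_cast
        ring
      | succ ℓ ihl =>
        intro hle
        rw [show abw (ℓ + 1) = abw ℓ ++ [0, 1] from rfl, DFA.evalFrom_of_append,
          ihl (by omega)]
        show (pa m n).step ((pa m n).step _ 0) 1 = _
        have hs01 : (A1 m).step st0 0 = st1 := by
          apply Fin.ext
          rw [A1_step_a _ hm, fin_val_add, val_one_of hm]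
          show (0 + 1) % m = 1
          rw [Nat.mod_eq_of_lt (by omega)]
        have hnotone : (1 : Fin n) ∉
            (S.image (fun q => q + (1 - anchor) + (ℓ : Fin n))).image (· + (1 : Fin n)) := by
          rw [Finset.mem_image]
          rintro ⟨q', hq', hq'e⟩
          rw [Finset.mem_image] at hq'
          obtain ⟨q, hq, rfl⟩ := hq'
          have hq3 : q = anchor - (ℓ : Fin n) - 1 := by linear_combination hq'e
          have hq4 : P (r - ℓ - 1) := by
            rw [hP]
            have he2 : ((i.val + (r - ℓ - 1) + 1 : ℕ) : Fin n) = q := by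
              rw [hq3, hanchor, show i.val + (r - ℓ - 1) + 1 = i.val + r - ℓ by omega]
              push_cast [Nat.cast_sub (show ℓ ≤ i.val + r by omega)]
              ring
            simp only []
            rw [he2]
            exact hq
          exact absurd hq4 (hmin _ (by omega))
        have hs11 : (A1 m).step st1 1 = st0 := by
          apply Fin.ext
          rw [A1_step_b_val]
          show (if (1 : ℕ) = 0 then 1 else if (1 : ℕ) = 1 then 0 else 1) % m = 0
          norm_num
        have einner : (pa m n).step (st0, S.image (fun q => q + (1 - anchor) + (ℓ : Fin n))) 0
            = (st1, (S.image (fun q => q + (1 - anchor) + (ℓ : Fin n))).image (· + (1 : Fin n))) := by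
          rw [pa_step_eval, hs01, if_neg (lst_ne_of_val (by simp [hst1]; omega)),
            Finset.union_empty, image_step_a hn]
        have eouter : (pa m n).step
              (st1, (S.image (fun q => q + (1 - anchor) + (ℓ : Fin n))).image (· + (1 : Fin n))) 1
            = (st0, S.image (fun q => q + (1 - anchor) + ((ℓ + 1 : ℕ) : Fin n))) := by
          rw [pa_step_eval, hs11, if_neg (lst_ne_of_val (by simp [hst0]; omega)),
            Finset.union_empty, image_step_b_id hn hnotone, Prod.mk.injEq]
          refine ⟨rfl, ?_⟩
          rw [Finset.image_image]
          apply Finset.image_congr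
          intro q _
          show q + (1 - anchor) + (ℓ : Fin n) + 1 = q + (1 - anchor) + ((ℓ + 1 : ℕ) : Fin n)
          push_cast
          ring
        rw [einner, eouter]
    -- normalize the set after the loop
    have hsetr : S.image (fun q => q + (1 - anchor) + (r : Fin n))
        = S.image (fun q => q - ((i.val : ℕ) : Fin n)) := by
      apply Finset.image_congr
      intro q _
      show q + (1 - anchor) + (r : Fin n) = q - ((i.val : ℕ) : Fin n)
      rw [hanchor]
      push_cast
      ring
    -- the final climb
    have eclimb : (pa m n).evalFrom (st0, S.image (fun q => q - ((i.val : ℕ) : Fin n))) (wa i.val)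
        = (i, S) := by
      rcases Nat.lt_or_ge i.val (m - 1) with hiv | hiv
      · rw [pa_wa_nocross hm hn _ _ _ (by show (0 : ℕ) + i.val < m - 1; omega), Prod.mk.injEq]
        constructor
        · apply Fin.ext
          simp [hst0]
        · rw [Finset.image_image]
          calc S.image _ = S.image id := Finset.image_congr (fun q _ => by
                show q - ((i.val : ℕ) : Fin n) + ((i.val : ℕ) : Fin n) = q
                ring)
            _ = S := Finset.image_id
      · have hieq : i.val = m - 1 := by omega
        have hilst : i = lst m := Fin.ext hieq
        have hwa : wa i.val = wa (m - 2) ++ [(0 : Fin 2)] := by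
          rw [← wa_succ']
          congr 1
          omega
        rw [hwa, DFA.evalFrom_of_append,
          pa_wa_nocross hm hn _ _ _ (by show (0 : ℕ) + (m - 2) < m - 1; omega)]
        show (pa m n).step _ 0 = _
        rw [pa_step_eval]
        have hmk : (⟨(st0 : Fin m).val + (m - 2), by show (0 : ℕ) + (m - 2) < m; omega⟩ : Fin m)
            = ⟨m - 2, by omega⟩ := by
          apply Fin.ext
          show (0 : ℕ) + (m - 2) = m - 2
          omega
        rw [hmk, m2_step_a hm, if_pos rfl, image_step_a hn, Prod.mk.injEq]
        refine ⟨hilst.symm, ?_⟩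
        rw [Finset.image_image, Finset.image_image]
        have hAll : ∀ (f : Fin n → Fin n), (∀ q, f q = q) → S.image f ∪ {(A2 n).start} = S := by
          intro f hf
          calc S.image f ∪ {(A2 n).start} = S ∪ {(A2 n).start} := by
                rw [Finset.image_congr (fun q _ => hf q), Finset.image_id']
            _ = S := Finset.union_eq_left.mpr (Finset.singleton_subset_iff.mpr (hvalid hilst))
        apply hAll
        intro q
        show q - ((i.val : ℕ) : Fin n) + ((m - 2 : ℕ) : Fin n) + 1 = q
        rw [hieq, show ((m - 1 : ℕ) : Fin n) = ((m - 2 : ℕ) : Fin n) + 1 by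
          rw [show m - 1 = (m - 2) + 1 by omega]; push_cast; ring]
        ring
    -- assemble
    refine ⟨w' ++ [0] ++ [0] ++ abw r ++ wa i.val, ?_⟩
    rw [DFA.evalFrom_of_append, DFA.evalFrom_of_append, DFA.evalFrom_of_append,
      DFA.evalFrom_of_append, hw', e1, e2, hloop r le_rfl, hsetr, eclimb]

end reach2
end BrzWit

namespace BrzWit
section final
variable {m n : ℕ} [NeZero m] [NeZero n]

lemma concat_lower (hm : 3 ≤ m) (hn : 3 ≤ n) (Q' : Type) (hQ' : Fintype Q')
    (D' : DFA (Fin 2) Q') (hD' : D'.accepts = (A1 m).accepts * (A2 n).accepts) :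
    m * 2 ^ n - 2 ^ (n - 1) ≤ Fintype.card Q' := by
  have hre : ∀ v : ValidSt m n, ∃ w, (pa m n).evalFrom (pa m n).start w = v.val :=
    fun v => reachable hm hn v.val.2.card v.val.1 v.val.2 rfl v.property
  have hlb := family_le_card (L := (A1 m).accepts * (A2 n).accepts)
    (ι := ValidSt m n) (fun v => Classical.choose (hre v)) ?_ Q' D' hD'
  · rwa [card_validSt hm hn] at hlb
  · intro s t hst hall
    have hmem : ∀ (v : ValidSt m n) (z : List (Fin 2)),
        (Classical.choose (hre v) ++ z ∈ (A1 m).accepts * (A2 n).accepts)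
          ↔ lst n ∈ ((pa m n).evalFrom v.val z).2 := by
      intro v z
      rw [← pa_accepts hm hn, DFA.mem_accepts]
      show (pa m n).evalFrom (pa m n).start (Classical.choose (hre v) ++ z) ∈ _ ↔ _
      rw [DFA.evalFrom_of_append, Classical.choose_spec (hre v)]
      rfl
    have hres : ∀ z, lst n ∈ ((pa m n).evalFrom s.val z).2 ↔
        lst n ∈ ((pa m n).evalFrom t.val z).2 := by
      intro z
      rw [← hmem s z, ← hmem t z]
      exact hall z
    exact residual_ne hm hn (fun hc => hst (Subtype.ext hc)) hres

end final
end BrzWit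


/-- For the two-letter Brzozowski pair `A_1, A_2`, one has `sc(L(A_1)) = m`,
`sc(L(A_2)) = n`, and `sc(L(A_1)·L(A_2)) = m·2^n − 2^{n−1}` (so this pair is a
two-letter witness for the catenation of two languages). -/
theorem two_letter_witness (m n : ℕ) (hm : 3 ≤ m) (hn : 3 ≤ n) :
    sc ((dfaW1 m (by omega)).accepts) = m ∧
    sc ((dfaW2 n (by omega)).accepts) = n ∧
    sc ((dfaW1 m (by omega)).accepts * (dfaW2 n (by omega)).accepts) =
      m * 2 ^ n - 2 ^ (n - 1) := by
  haveI : NeZero m := ⟨by omega⟩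
  haveI : NeZero n := ⟨by omega⟩
  refine ⟨BrzWit.sc_L1 hm, BrzWit.sc_L2 hn, ?_⟩
  apply le_antisymm
  · have h1 := BrzWit.sc_le (BrzWit.ValidSt m n) (BrzWit.paSub m n (by omega))
      (show (BrzWit.paSub m n (by omega)).accepts
          = (dfaW1 m (by omega)).accepts * (dfaW2 n (by omega)).accepts by
        rw [BrzWit.paSub_accepts, BrzWit.pa_accepts hm hn]
        rfl)
    rwa [BrzWit.card_validSt hm hn] at h1
  · apply BrzWit.le_sc _ (BrzWit.ValidSt m n) (BrzWit.paSub m n (by omega))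
      (show (BrzWit.paSub m n (by omega)).accepts
          = (dfaW1 m (by omega)).accepts * (dfaW2 n (by omega)).accepts by
        rw [BrzWit.paSub_accepts, BrzWit.pa_accepts hm hn]
        rfl)
    intro Q' hQ' D' hD'
    exact BrzWit.concat_lower hm hn Q' hQ' D' hD'
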